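/- arXiv:math/0612546 — 2 statements merged into one kernel-verified Lean document; each statement's English description precedes it below -/
import Mathlib

section
/- Relative concentration inequality. Let (Z,T) be a measurable space, π a probability measure, and Z_1,…,Z_n i.i.d. with law π. Let F be a set, Q : Z × F → ℝ a loss with z ↦ Q(z,f) measurable, A(f) = E[Q(Z_1,f)], A_n(f) = (1/n)Σ_{i=1}^n Q(Z_i,f), and f* ∈ F with A(f*) = min_{f∈F} A(f), A* = A(f*). Let f_1,…,f_M ∈ F and assume: for some κ ≥ 1 and c > 0, E[(Q(Z_1,f_j) − Q(Z_1,f*))²] ≤ c (A(f_j) − A*)^{1/κ} for every j, and |Q(Z_1,f_j) − Q(Z_1,f*)| ≤ K almost surely for every j, with K ≥ 1. Then for any positive reals t and x and any integer n ≥ 1: P[ max_{1≤j≤M} ( A(f_j) − A_n(f_j) − (A(f*) − A_n(f*)) ) / ( A(f_j) − A* + x ) > t ] ≤ M [ (1 + 4c x^{1/κ}/(n (t x)²)) exp( − n (t x)² / (4 c x^{1/κ}) ) + (1 + 4K/(3 n t x)) exp( − 3 n t x / (4K) ) ]. -/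
/-!
For each `j` put `g = Q(·, f_j) - Q(·, f*)` and `a = A(f_j) - A*`. On the event of index `j`
the i.i.d. bounded variables `-g(Z_i)` exceed their mean by `t (a + x)` on average, and the
margin assumption gives them the variance proxy `c (a + x)^{1/κ}`. Bernstein's inequality
(a Chernoff bound using `exp y ≤ 1 + y + y²` for `y ≤ 3/2`) bounds that probability by
`exp (-n (t(a+x))² / (4c(a+x)^{1/κ})) + exp (-3n t(a+x) / (4K))`; since `1/κ ≤ 2` both
exponents grow with `a`, so the bound at `a = 0` holds for every `j`, and a union bound over
the `M` indices concludes.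
-/

open MeasureTheory ProbabilityTheory Real

theorem Real.exp_le_one_add_add_sq {x : ℝ} (hx : x ≤ 3 / 2) : exp x ≤ 1 + x + x ^ 2 := by
  rcases le_or_gt x (-1) with hx₁ | hx₁
  · nlinarith [exp_le_one_iff.2 (by linarith : x ≤ 0)]
  have habs : |x| ≤ 3 / 2 := abs_le.2 ⟨by linarith, hx⟩
  have h := Complex.exp_bound' (x := x) (n := 3) (by
    rw [Complex.norm_real, Real.norm_eq_abs]; norm_num; linarith)
  have h' : |exp x - (1 + x + x ^ 2 / 2)| ≤ |x| ^ 3 / 3 := by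
    rw [← Real.norm_eq_abs, ← Complex.norm_real]
    norm_num [Finset.sum_range_succ, Nat.factorial, ← Complex.ofReal_exp] at h ⊢
    linarith
  have hcube : |x| ^ 3 ≤ 3 / 2 * x ^ 2 := by
    rw [pow_succ, ← sq_abs x]; nlinarith [sq_nonneg |x|]
  linarith [(abs_le.1 h').2]

lemma Real.sq_div_rpow_le_sq_div_rpow {x y p : ℝ} (hx : 0 < x) (hxy : x ≤ y) (hp : p ≤ 2) :
    x ^ 2 / x ^ p ≤ y ^ 2 / y ^ p := by
  have hy : 0 < y := hx.trans_le hxy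
  rw [← rpow_natCast, ← rpow_natCast, ← rpow_sub hx, ← rpow_sub hy]
  exact rpow_le_rpow hx.le hxy (by norm_num; linarith)

lemma bernstein_bound_le {n t x a c K p : ℝ} (hn : 0 ≤ n) (ht : 0 ≤ t) (hx : 0 < x)
    (ha : 0 ≤ a) (hc : 0 < c) (hK : 0 < K) (hp : p ≤ 2) :
    exp (-(n * (t * (a + x)) ^ 2 / (4 * (c * (a + x) ^ p))))
        + exp (-(3 * n * (t * (a + x)) / (4 * K)))
      ≤ (1 + 4 * c * x ^ p / (n * (t * x) ^ 2)) * exp (-(n * (t * x) ^ 2 / (4 * c * x ^ p)))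
        + (1 + 4 * K / (3 * n * t * x)) * exp (-(3 * n * t * x / (4 * K))) := by
  have hvar :
      n * (t * x) ^ 2 / (4 * c * x ^ p) ≤ n * (t * (a + x)) ^ 2 / (4 * (c * (a + x) ^ p)) :=
    calc n * (t * x) ^ 2 / (4 * c * x ^ p) = n * t ^ 2 / (4 * c) * (x ^ 2 / x ^ p) := by ring
      _ ≤ n * t ^ 2 / (4 * c) * ((a + x) ^ 2 / (a + x) ^ p) := by
        gcongr n * t ^ 2 / (4 * c) * ?_
        exact sq_div_rpow_le_sq_div_rpow hx (le_add_of_nonneg_left ha) hp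
      _ = n * (t * (a + x)) ^ 2 / (4 * (c * (a + x) ^ p)) := by ring
  have hrange : 3 * n * t * x / (4 * K) ≤ 3 * n * (t * (a + x)) / (4 * K) := by
    gcongr ?_ / _
    nlinarith [mul_nonneg (mul_nonneg hn ht) ha]
  gcongr
  · exact le_mul_of_one_le_left (exp_nonneg _) (le_add_of_nonneg_right (by positivity))
      |>.trans' (exp_le_exp.2 (neg_le_neg hvar))
  · exact le_mul_of_one_le_left (exp_nonneg _) (le_add_of_nonneg_right (by positivity))
      |>.trans' (exp_le_exp.2 (neg_le_neg hrange))

lemma exists_bernstein_exponent {K V s : ℝ} (hK : 0 < K) (hV : 0 < V) (hs : 0 ≤ s) :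
    ∃ l, 0 ≤ l ∧ l * K ≤ 3 / 2 ∧
      (l ^ 2 * V - l * s ≤ -(s ^ 2 / (4 * V)) ∨ l ^ 2 * V - l * s ≤ -(3 * s / (4 * K))) := by
  rcases le_or_gt (K * s / 3) V with hsV | hVs
  · refine ⟨s / (2 * V), by positivity, ?_, .inl (le_of_eq (by field_simp; ring))⟩
    rw [div_mul_eq_mul_div, div_le_iff₀ (by positivity)]
    linarith
  · refine ⟨3 / (2 * K), by positivity, le_of_eq (by field_simp), .inr ?_⟩
    have : (3 / (2 * K)) ^ 2 * V ≤ (3 / (2 * K)) ^ 2 * (K * s / 3) := by gcongr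
    calc (3 / (2 * K)) ^ 2 * V - 3 / (2 * K) * s
        ≤ (3 / (2 * K)) ^ 2 * (K * s / 3) - 3 / (2 * K) * s := by linarith
      _ = -(3 * s / (4 * K)) := by field_simp; ring

namespace ProbabilityTheory

variable {Ω : Type*} [MeasurableSpace Ω] {μ : Measure Ω}

section Bounded

variable {X : Ω → ℝ} {K : ℝ}

lemma integrable_sq_of_ae_abs_le [IsFiniteMeasure μ] (hX : AEMeasurable X μ)
    (hb : ∀ᵐ ω ∂μ, |X ω| ≤ K) : Integrable (X ^ 2) μ :=
  .of_bound (hX.pow_const 2).aestronglyMeasurable (K ^ 2) <| by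
    filter_upwards [hb] with ω h
    simp only [Pi.pow_apply, norm_pow, norm_eq_abs]
    exact pow_le_pow_left₀ (abs_nonneg _) h 2

lemma integrable_exp_mul_of_ae_abs_le [IsFiniteMeasure μ] (hX : AEMeasurable X μ)
    (hb : ∀ᵐ ω ∂μ, |X ω| ≤ K) (l : ℝ) : Integrable (fun ω ↦ exp (l * X ω)) μ :=
  .of_bound (hX.const_mul l).exp.aestronglyMeasurable (exp (|l| * K)) <| by
    filter_upwards [hb] with ω h
    rw [norm_eq_abs, abs_exp, exp_le_exp]
    calc l * X ω ≤ |l * X ω| := le_abs_self _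
      _ ≤ |l| * K := by rw [abs_mul]; gcongr

lemma mgf_le_exp_of_ae_abs_le [IsProbabilityMeasure μ] (hX : AEMeasurable X μ)
    (hb : ∀ᵐ ω ∂μ, |X ω| ≤ K) {l : ℝ} (hl : 0 ≤ l) (hlK : l * K ≤ 3 / 2) :
    mgf X μ l ≤ exp (l * μ[X] + l ^ 2 * μ[X ^ 2]) := by
  have hX_int : Integrable X μ := .of_bound hX.aestronglyMeasurable K (by simpa using hb)
  have hquad_int : Integrable (fun ω ↦ 1 + l * X ω + l ^ 2 * (X ^ 2) ω) μ :=
    ((integrable_const 1).add (hX_int.const_mul l)).add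
      ((integrable_sq_of_ae_abs_le hX hb).const_mul _)
  calc mgf X μ l ≤ ∫ ω, 1 + l * X ω + l ^ 2 * (X ^ 2) ω ∂μ := by
        refine integral_mono_ae (integrable_exp_mul_of_ae_abs_le hX hb l) hquad_int ?_
        filter_upwards [hb] with ω h
        have hlX : l * X ω ≤ 3 / 2 :=
          (mul_le_mul_of_nonneg_left ((le_abs_self _).trans h) hl).trans hlK
        simpa [mul_pow] using exp_le_one_add_add_sq hlX
    _ = 1 + (l * μ[X] + l ^ 2 * μ[X ^ 2]) := by
        have hlin_int : Integrable (fun ω ↦ 1 + l * X ω) μ :=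
          (integrable_const 1).add (hX_int.const_mul l)
        rw [integral_add hlin_int ((integrable_sq_of_ae_abs_le hX hb).const_mul _),
          integral_add (integrable_const 1) (hX_int.const_mul l),
          integral_const_mul, integral_const_mul]
        simp [add_assoc]
    _ ≤ exp (l * μ[X] + l ^ 2 * μ[X ^ 2]) := by
        linarith [add_one_le_exp (l * μ[X] + l ^ 2 * μ[X ^ 2])]

end Bounded

section Bernstein

variable {ι : Type*} [Fintype ι] {X : ι → Ω → ℝ} {K V s : ℝ}

lemma measureReal_sum_ge_le_exp_of_ae_abs_le [IsProbabilityMeasure μ] (h_indep : iIndepFun X μ)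
    (h_meas : ∀ i, Measurable (X i)) (hb : ∀ i, ∀ᵐ ω ∂μ, |X i ω| ≤ K)
    (hV : ∀ i, μ[X i ^ 2] ≤ V) {l : ℝ} (hl : 0 ≤ l) (hlK : l * K ≤ 3 / 2) :
    μ.real {ω | ∑ i, μ[X i] + Fintype.card ι * s ≤ ∑ i, X i ω}
      ≤ exp (Fintype.card ι * (l ^ 2 * V - l * s)) := by
  have hmgf : mgf (∑ i, X i) μ l ≤ exp (∑ i, (l * μ[X i] + l ^ 2 * V)) := by
    rw [h_indep.mgf_sum h_meas, exp_sum]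
    refine Finset.prod_le_prod (fun i _ ↦ mgf_nonneg) fun i _ ↦ ?_
    refine (mgf_le_exp_of_ae_abs_le (h_meas i).aemeasurable (hb i) hl hlK).trans ?_
    gcongr
    exact hV i
  have hint : Integrable (fun ω ↦ exp (l * (∑ i, X i) ω)) μ :=
    h_indep.integrable_exp_mul_sum h_meas fun i _ ↦
      integrable_exp_mul_of_ae_abs_le (h_meas i).aemeasurable (hb i) l
  calc μ.real {ω | ∑ i, μ[X i] + Fintype.card ι * s ≤ ∑ i, X i ω}
      = μ.real {ω | ∑ i, μ[X i] + Fintype.card ι * s ≤ (∑ i, X i) ω} := by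
        simp only [Finset.sum_apply]
    _ ≤ exp (-l * (∑ i, μ[X i] + Fintype.card ι * s)) * mgf (∑ i, X i) μ l :=
        measure_ge_le_exp_mul_mgf _ hl hint
    _ ≤ exp (-l * (∑ i, μ[X i] + Fintype.card ι * s))
          * exp (∑ i, (l * μ[X i] + l ^ 2 * V)) := by
        gcongr
    _ = exp (Fintype.card ι * (l ^ 2 * V - l * s)) := by
        rw [← exp_add, Finset.sum_add_distrib, ← Finset.mul_sum, Finset.sum_const,
          Finset.card_univ, nsmul_eq_mul]
        ring_nf

theorem measureReal_sum_ge_le_bernstein [IsProbabilityMeasure μ] (h_indep : iIndepFun X μ)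
    (h_meas : ∀ i, Measurable (X i)) (hK : 0 < K) (hb : ∀ i, ∀ᵐ ω ∂μ, |X i ω| ≤ K)
    (hV₀ : 0 < V) (hV : ∀ i, μ[X i ^ 2] ≤ V) (hs : 0 ≤ s) :
    μ.real {ω | ∑ i, μ[X i] + Fintype.card ι * s ≤ ∑ i, X i ω}
      ≤ exp (-(Fintype.card ι * s ^ 2 / (4 * V)))
        + exp (-(3 * Fintype.card ι * s / (4 * K))) := by
  obtain ⟨l, hl, hlK, hexp⟩ := exists_bernstein_exponent hK hV₀ hs
  refine (measureReal_sum_ge_le_exp_of_ae_abs_le h_indep h_meas hb hV hl hlK).trans ?_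
  have hN : (0 : ℝ) ≤ Fintype.card ι := Nat.cast_nonneg _
  rcases hexp with h | h
  · refine le_add_of_le_of_nonneg ?_ (exp_nonneg _)
    rw [exp_le_exp]
    exact (mul_le_mul_of_nonneg_left h hN).trans_eq (by ring)
  · refine le_add_of_nonneg_of_le (exp_nonneg _) ?_
    rw [exp_le_exp]
    exact (mul_le_mul_of_nonneg_left h hN).trans_eq (by ring)

end Bernstein

section Sample

variable {Z : Type*} [MeasurableSpace Z] {P : Measure Ω} [IsProbabilityMeasure P]
  {ν : Measure Z} {n : ℕ} {Z_ : Fin n → Ω → Z}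

theorem measureReal_relative_deviation_le (hZmeas : ∀ i, Measurable (Z_ i))
    (hlaw : ∀ i, P.map (Z_ i) = ν) (hindep : iIndepFun Z_ P) (hn : 0 < n) {φ : Z → ℝ}
    (hφ : Measurable φ) {κ c K t x : ℝ} (hκ : 1 ≤ κ) (hc : 0 < c) (hK : 0 < K)
    (hb : ∀ᵐ z ∂ν, |φ z| ≤ K) (hmean_nonneg : 0 ≤ ∫ z, φ z ∂ν)
    (hmargin : ∫ z, φ z ^ 2 ∂ν ≤ c * (∫ z, φ z ∂ν) ^ (1 / κ)) (ht : 0 ≤ t) (hx : 0 < x) :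
    P.real {ω | t * (∫ z, φ z ∂ν + x) < ∫ z, φ z ∂ν - (n : ℝ)⁻¹ * ∑ i, φ (Z_ i ω)}
      ≤ (1 + 4 * c * x ^ (1 / κ) / (n * (t * x) ^ 2))
            * exp (-(n * (t * x) ^ 2 / (4 * c * x ^ (1 / κ))))
        + (1 + 4 * K / (3 * n * t * x)) * exp (-(3 * n * t * x / (4 * K))) := by
  set a := ∫ z, φ z ∂ν
  have hκ₀ : 0 < κ := one_pos.trans_le hκ
  have hn₀ : (0 : ℝ) < n := Nat.cast_pos.2 hn
  have hintegral_comp : ∀ i {ψ : Z → ℝ}, Measurable ψ → ∫ ω, ψ (Z_ i ω) ∂P = ∫ z, ψ z ∂ν :=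
    fun i ψ hψ ↦ by
      rw [← hlaw i, integral_map (hZmeas i).aemeasurable hψ.aestronglyMeasurable]
  have hV : ∫ z, φ z ^ 2 ∂ν ≤ c * (a + x) ^ (1 / κ) :=
    hmargin.trans (by gcongr; linarith)
  have hbern := measureReal_sum_ge_le_bernstein (μ := P) (X := fun i ω ↦ -φ (Z_ i ω))
    (hindep.comp _ fun _ ↦ hφ.neg) (fun i ↦ (hφ.comp (hZmeas i)).neg) hK
    (fun i ↦ ae_of_ae_map (p := fun z ↦ |-φ z| ≤ K) (hZmeas i).aemeasurable
      (by simpa [hlaw i] using hb))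
    (V := c * (a + x) ^ (1 / κ)) (by positivity)
    (fun i ↦ by
      simp only [Pi.pow_apply, neg_sq]
      rwa [hintegral_comp i (hφ.pow_const 2)])
    (s := t * (a + x)) (by positivity)
  have hmean_comp : ∀ i, ∫ ω, -φ (Z_ i ω) ∂P = -a := fun i ↦ by
    rw [hintegral_comp i (ψ := fun z ↦ -φ z) hφ.neg, integral_neg]
  simp only [hmean_comp, Finset.sum_const, Finset.card_univ, Fintype.card_fin, nsmul_eq_mul,
    Finset.sum_neg_distrib] at hbern
  calc P.real {ω | t * (a + x) < a - (n : ℝ)⁻¹ * ∑ i, φ (Z_ i ω)}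
      ≤ P.real {ω | n * -a + n * (t * (a + x)) ≤ -∑ i, φ (Z_ i ω)} := by
        refine measureReal_mono fun ω hω ↦ ?_
        have := mul_lt_mul_of_pos_left hω.out hn₀
        rw [mul_sub, mul_inv_cancel_left₀ hn₀.ne'] at this
        simp only [Set.mem_ofPred_eq]
        linarith
    _ ≤ _ := hbern
    _ ≤ _ := bernstein_bound_le hn₀.le ht hx hmean_nonneg hc hK
        ((div_le_one hκ₀).2 hκ |>.trans one_le_two)

end Sample

end ProbabilityTheory

lemma MeasureTheory.integral_sub_eq_of_integral_sq_le {Z : Type*} [MeasurableSpace Z]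
    {ν : Measure Z} [IsFiniteMeasure ν] {u v : Z → ℝ} (huv : Measurable fun z ↦ u z - v z)
    {K c p : ℝ} (hb : ∀ᵐ z ∂ν, |u z - v z| ≤ K) (hp : 0 < p)
    (h : ∫ z, (u z - v z) ^ 2 ∂ν ≤ c * (∫ z, u z ∂ν - ∫ z, v z ∂ν) ^ p) :
    ∫ z, (u z - v z) ∂ν = ∫ z, u z ∂ν - ∫ z, v z ∂ν := by
  -- If `v` is not integrable, neither is `u`: both integrals are the junk value `0`, and then
  -- `h` forces `u = v` almost everywhere.
  have hint : Integrable (fun z ↦ u z - v z) ν :=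
    .of_bound huv.aestronglyMeasurable K (by simpa using hb)
  by_cases hv : Integrable v ν
  · exact integral_sub ((hint.add hv).congr (.of_forall fun z ↦ by simp)) hv
  have hu : ¬Integrable u ν := fun hu ↦
    hv ((hu.sub hint).congr (.of_forall fun z ↦ by simp))
  rw [integral_undef hu, integral_undef hv, sub_zero, zero_rpow hp.ne', mul_zero] at h
  have hsq : (fun z ↦ (u z - v z) ^ 2) =ᵐ[ν] 0 :=
    (integral_eq_zero_iff_of_nonneg (fun z ↦ sq_nonneg _)
      (integrable_sq_of_ae_abs_le huv.aemeasurable hb)).1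
      (h.antisymm (integral_nonneg fun z ↦ sq_nonneg _))
  rw [integral_undef hu, integral_undef hv, sub_zero, integral_eq_zero_of_ae]
  filter_upwards [hsq] with z hz
  simpa using hz

/-- Relative concentration inequality (Lemma 1): under the margin and
boundedness assumptions, the probability that the maximal normalized deviation
of the empirical risk exceeds `t` is bounded by the stated quantity. (The event
`max_{1≤j≤M} (...) > t` is expressed as `∃ j, (...) > t`.) -/
theorem relative_concentration_inequality
    {Z : Type*} [MeasurableSpace Z] {Ω : Type*} [MeasurableSpace Ω]
    (P : Measure Ω) [IsProbabilityMeasure P]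
    (ν : Measure Z) [IsProbabilityMeasure ν]
    {F : Type*} (Q : Z → F → ℝ)
    (hQmeas : ∀ f : F, Measurable fun z => Q z f)
    (n : ℕ) (hn : 1 ≤ n)
    (Z_ : Fin n → Ω → Z)
    (hZmeas : ∀ i, Measurable (Z_ i))
    (hlaw : ∀ i, Measure.map (Z_ i) P = ν)
    (hindep : iIndepFun Z_ P)
    -- the risk `A` and its minimizer `f*`
    (A : F → ℝ) (hA : ∀ f, A f = ∫ z, Q z f ∂ν)
    (fstar : F) (hfstar : ∀ f, A fstar ≤ A f)
    -- the finite dictionary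
    (M : ℕ) (fs : Fin M → F)
    -- margin and boundedness assumptions
    (κ c K : ℝ) (hκ : 1 ≤ κ) (hc : 0 < c) (hK : 1 ≤ K)
    (hmargin : ∀ j, ∫ z, (Q z (fs j) - Q z fstar) ^ 2 ∂ν
                      ≤ c * (A (fs j) - A fstar) ^ (1 / κ))
    (hbound : ∀ j, ∀ᵐ z ∂ν, |Q z (fs j) - Q z fstar| ≤ K)
    -- the empirical risk
    (An : F → Ω → ℝ)
    (hAn : ∀ f ω, An f ω = (n : ℝ)⁻¹ * ∑ i, Q (Z_ i ω) f)
    (t x : ℝ) (ht : 0 < t) (hx : 0 < x) :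
    (P {ω | ∃ j, t < (A (fs j) - An (fs j) ω - (A fstar - An fstar ω))
                      / (A (fs j) - A fstar + x)}).toReal
      ≤ M * ((1 + 4 * c * x ^ (1 / κ) / (n * (t * x) ^ 2))
              * Real.exp (-(n * (t * x) ^ 2 / (4 * c * x ^ (1 / κ))))
            + (1 + 4 * K / (3 * n * t * x))
              * Real.exp (-(3 * n * t * x / (4 * K)))) := by
  set g : Fin M → Z → ℝ := fun j z ↦ Q z (fs j) - Q z fstar with hg
  have hgmeas : ∀ j, Measurable (g j) := fun j ↦ (hQmeas (fs j)).sub (hQmeas fstar)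
  have hmean : ∀ j, ∫ z, g j z ∂ν = A (fs j) - A fstar := fun j ↦ by
    have hmargin_j := hmargin j
    rw [hA (fs j), hA fstar] at hmargin_j ⊢
    exact integral_sub_eq_of_integral_sq_le (hgmeas j) (hbound j) (by positivity) hmargin_j
  have hevent : ∀ j, {ω | t < (A (fs j) - An (fs j) ω - (A fstar - An fstar ω))
      / (A (fs j) - A fstar + x)}
      ⊆ {ω | t * (∫ z, g j z ∂ν + x) < ∫ z, g j z ∂ν - (n : ℝ)⁻¹ * ∑ i, g j (Z_ i ω)} := by
    intro j ω hω
    have hpos : 0 < A (fs j) - A fstar + x := by linarith [hfstar (fs j)]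
    simp only [Set.mem_ofPred_eq, hAn, lt_div_iff₀ hpos] at hω ⊢
    rw [hmean j, hg, Finset.sum_sub_distrib, mul_sub]
    linarith
  rw [Set.ofPred_exists]
  refine (measureReal_iUnion_fintype_le _).trans ?_
  refine (Finset.sum_le_card_nsmul _ _ _ fun j _ ↦ (measureReal_mono (hevent j)).trans
    (measureReal_relative_deviation_le hZmeas hlaw hindep hn (hgmeas j) hκ hc
      (one_pos.trans_le hK) (hbound j) (by rw [hmean j]; linarith [hfstar (fs j)])
      (by rw [hmean j]; exact hmargin j) ht.le hx)).trans_eq ?_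
  rw [Finset.card_univ, Fintype.card_fin, nsmul_eq_mul]
end

section
/- Margin assumption in bounded regression. Let (X,A) be a measurable space and let (X,Y) be a random pair with values in X × [0,1], with law π and marginal P^X on X. Let f*(x) = E[Y | X = x] be the regression function. Then for every measurable function f : X → [0,1], with Q((x,y),g) = (y − g(x))²: E[ (Q((X,Y),f) − Q((X,Y),f*))² ] ≤ 16 ( E[Q((X,Y),f)] − E[Q((X,Y),f*)] ) = 16 ‖f − f*‖²_{L²(P^X)}. In other words, every probability distribution π on X × [0,1] satisfies the margin assumption MA(1, 16, F₁), where F₁ is the set of all measurable functions from X to [0,1]. -/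
open MeasureTheory Set

/-! Write `d = f - f*`. Then `Q(z, f) - Q(z, f*) = d(x) (f(x) + f*(x) - 2y)`, and since all values
lie in `[0, 1]` its square is at most `4 d(x)²`. On the other hand
`Q(z, f) - Q(z, f*) = d(x)² - 2 d(x) (y - f*(x))`, and the cross term integrates to zero because
`f*(X)` is the conditional expectation of `Y` given `X`; so the excess risk is `E[d(X)²]`. -/

theorem integral_mul_eq_zero_of_forall_setIntegral_eq_zero {Ω : Type*}
    {m mΩ : MeasurableSpace Ω} {μ : Measure Ω} (hm : m ≤ mΩ) [SigmaFinite (μ.trim hm)]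
    {g h : Ω → ℝ} (hg : StronglyMeasurable[m] g) (hh : Integrable h μ)
    (hgh : Integrable (g * h) μ) (hzero : ∀ s, MeasurableSet[m] s → ∫ x in s, h x ∂μ = 0) :
    ∫ x, g x * h x ∂μ = 0 := by
  have hcondExp : μ[h | m] =ᵐ[μ] 0 :=
    (ae_eq_condExp_of_forall_setIntegral_eq hm hh (fun _ _ _ => integrableOn_zero)
      (fun s hs _ => by simp [hzero s hs]) stronglyMeasurable_zero.aestronglyMeasurable).symm
  calc ∫ x, g x * h x ∂μ = ∫ x, (μ[g * h | m]) x ∂μ := (integral_condExp hm).symm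
    _ = ∫ x, (g * μ[h | m]) x ∂μ :=
      integral_congr_ae (condExp_mul_of_stronglyMeasurable_left hg hgh hh)
    _ = ∫ _, (0 : ℝ) ∂μ := integral_congr_ae (hcondExp.mono fun x hx => by simp [hx])
    _ = 0 := integral_zero _ _

theorem integrable_sq_sub_of_mem_Icc {α : Type*} [MeasurableSpace α] {μ : Measure α}
    [IsFiniteMeasure μ] {u v : α → ℝ} (hu : Measurable u) (hv : Measurable v)
    (hu01 : ∀ᵐ a ∂μ, u a ∈ Icc 0 1) (hv01 : ∀ᵐ a ∂μ, v a ∈ Icc 0 1) :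
    Integrable (fun a => (u a - v a) ^ 2) μ := by
  refine Integrable.of_bound (by fun_prop) 1 ?_
  filter_upwards [hu01, hv01] with a ⟨hu0, hu1⟩ ⟨hv0, hv1⟩
  rw [Real.norm_eq_abs, abs_sq]
  nlinarith

theorem sq_sub_sq_sub_sq_le {y a b : ℝ} (hy : y ∈ Icc 0 1) (ha : a ∈ Icc 0 1)
    (hb : b ∈ Icc 0 1) : ((y - a) ^ 2 - (y - b) ^ 2) ^ 2 ≤ 4 * (a - b) ^ 2 := by
  have hbound : (a + b - 2 * y) ^ 2 ≤ 4 := by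
    nlinarith [hy.1, hy.2, ha.1, ha.2, hb.1, hb.2]
  calc ((y - a) ^ 2 - (y - b) ^ 2) ^ 2 = (a - b) ^ 2 * (a + b - 2 * y) ^ 2 := by ring
    _ ≤ (a - b) ^ 2 * 4 := mul_le_mul_of_nonneg_left hbound (sq_nonneg _)
    _ = 4 * (a - b) ^ 2 := mul_comm _ _

section Regression

variable {X : Type*} [MeasurableSpace X] {ν : Measure (X × ℝ)} {f fstar : X → ℝ}

def IsRegressionFunction (ν : Measure (X × ℝ)) (fstar : X → ℝ) : Prop :=
  ∀ S : Set X, MeasurableSet S →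
    ∫ z in Prod.fst ⁻¹' S, z.2 ∂ν = ∫ z in Prod.fst ⁻¹' S, fstar z.1 ∂ν

theorem IsRegressionFunction.integral_mul_sub_eq_zero [IsFiniteMeasure ν]
    (hreg : IsRegressionFunction ν fstar) (hy : Integrable (fun z : X × ℝ => z.2) ν)
    (hfstar : Integrable (fun z : X × ℝ => fstar z.1) ν) {g : X → ℝ} (hg : Measurable g)
    {C : ℝ} (hgC : ∀ x, |g x| ≤ C) :
    ∫ z, g z.1 * (z.2 - fstar z.1) ∂ν = 0 := by
  refine integral_mul_eq_zero_of_forall_setIntegral_eq_zero measurable_fst.comap_le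
    (hg.comp (comap_measurable Prod.fst)).stronglyMeasurable (hy.sub hfstar)
    ((hy.sub hfstar).bdd_mul (hg.comp measurable_fst).aestronglyMeasurable
      (ae_of_all _ fun z => hgC z.1)) ?_
  rintro _ ⟨S, hS, rfl⟩
  rw [integral_sub hy.integrableOn hfstar.integrableOn, hreg S hS, sub_self]

variable [IsFiniteMeasure ν] (hY : ∀ᵐ z ∂ν, z.2 ∈ Icc (0 : ℝ) 1)
  (hfstar : Measurable fstar) (hfstar01 : ∀ x, fstar x ∈ Icc (0 : ℝ) 1)
  (hf : Measurable f) (hf01 : ∀ x, f x ∈ Icc (0 : ℝ) 1)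
include hY hfstar hfstar01 hf hf01

theorem IsRegressionFunction.integral_sq_sub_sub_integral_sq_sub
    (hreg : IsRegressionFunction ν fstar) :
    (∫ z, (z.2 - f z.1) ^ 2 ∂ν) - ∫ z, (z.2 - fstar z.1) ^ 2 ∂ν
      = ∫ z, (f z.1 - fstar z.1) ^ 2 ∂ν := by
  have hy : Integrable (fun z : X × ℝ => z.2) ν :=
    Integrable.of_bound measurable_snd.aestronglyMeasurable 1
      (hY.mono fun z hz => abs_le.2 ⟨by linarith [hz.1], hz.2⟩)
  have hfstar_int : Integrable (fun z : X × ℝ => fstar z.1) ν :=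
    Integrable.of_bound (hfstar.comp measurable_fst).aestronglyMeasurable 1
      (ae_of_all _ fun z => abs_le.2 ⟨by linarith [(hfstar01 z.1).1], (hfstar01 z.1).2⟩)
  have horth := hreg.integral_mul_sub_eq_zero hy hfstar_int (hf.sub hfstar) (C := 1) fun x =>
    abs_sub_le_iff.2 ⟨by linarith [(hf01 x).2, (hfstar01 x).1],
      by linarith [(hf01 x).1, (hfstar01 x).2]⟩
  have hcross : ∫ z, ((z.2 - f z.1) ^ 2 - (z.2 - fstar z.1) ^ 2 - (f z.1 - fstar z.1) ^ 2) ∂ν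
      = 0 := by
    calc _ = ∫ z, -2 * ((f - fstar) z.1 * (z.2 - fstar z.1)) ∂ν := by
          congr 1; ext z; simp only [Pi.sub_apply]; ring
      _ = 0 := by rw [integral_const_mul, horth, mul_zero]
  have hYf : Integrable (fun z : X × ℝ => (z.2 - f z.1) ^ 2) ν :=
    integrable_sq_sub_of_mem_Icc measurable_snd (hf.comp measurable_fst) hY
      (ae_of_all _ fun z => hf01 z.1)
  have hYfstar : Integrable (fun z : X × ℝ => (z.2 - fstar z.1) ^ 2) ν :=
    integrable_sq_sub_of_mem_Icc measurable_snd (hfstar.comp measurable_fst) hY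
      (ae_of_all _ fun z => hfstar01 z.1)
  have hd : Integrable (fun z : X × ℝ => (f z.1 - fstar z.1) ^ 2) ν :=
    integrable_sq_sub_of_mem_Icc (hf.comp measurable_fst) (hfstar.comp measurable_fst)
      (ae_of_all _ fun z => hf01 z.1) (ae_of_all _ fun z => hfstar01 z.1)
  rw [integral_sub (hYf.sub' hYfstar) hd, integral_sub hYf hYfstar] at hcross
  linarith

theorem integral_sq_sub_sq_sub_sq_le :
    ∫ z, ((z.2 - f z.1) ^ 2 - (z.2 - fstar z.1) ^ 2) ^ 2 ∂ν
      ≤ 4 * ∫ z, (f z.1 - fstar z.1) ^ 2 ∂ν := by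
  have hd : Integrable (fun z : X × ℝ => (f z.1 - fstar z.1) ^ 2) ν :=
    integrable_sq_sub_of_mem_Icc (hf.comp measurable_fst) (hfstar.comp measurable_fst)
      (ae_of_all _ fun z => hf01 z.1) (ae_of_all _ fun z => hfstar01 z.1)
  rw [← integral_const_mul]
  exact integral_mono_of_nonneg (ae_of_all _ fun _ => sq_nonneg _) (hd.const_mul 4)
    (hY.mono fun z hz => sq_sub_sq_sub_sq_le hz (hf01 z.1) (hfstar01 z.1))

end Regression

/-- Margin assumption MA(1, 16, F₁) in bounded regression: for every measurable
`f : X → [0,1]`, `E[(Q(Z,f) − Q(Z,f*))²] ≤ 16 (A(f) − A(f*))`, and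
`A(f) − A(f*) = ‖f − f*‖²_{L²(Pˣ)}`. Here `ν` is the joint law of `(X,Y)`. -/
theorem margin_assumption_bounded_regression
    {X : Type*} [MeasurableSpace X]
    (ν : Measure (X × ℝ)) [IsProbabilityMeasure ν]
    (hY : ∀ᵐ z ∂ν, z.2 ∈ Set.Icc (0 : ℝ) 1)
    (PX : Measure X) (hPX : PX = Measure.map Prod.fst ν)
    -- `f*` is (a version of) the regression function `E[Y | X = ·]`
    (fstar : X → ℝ) (hfstarmeas : Measurable fstar)
    (hfstar01 : ∀ x, fstar x ∈ Set.Icc (0 : ℝ) 1)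
    (hcond : ∀ S : Set X, MeasurableSet S →
      ∫ z in Prod.fst ⁻¹' S, z.2 ∂ν = ∫ z in Prod.fst ⁻¹' S, fstar z.1 ∂ν)
    (f : X → ℝ) (hfmeas : Measurable f) (hf01 : ∀ x, f x ∈ Set.Icc (0 : ℝ) 1) :
    (∫ z, ((z.2 - f z.1) ^ 2 - (z.2 - fstar z.1) ^ 2) ^ 2 ∂ν
        ≤ 16 * ((∫ z, (z.2 - f z.1) ^ 2 ∂ν) - ∫ z, (z.2 - fstar z.1) ^ 2 ∂ν)) ∧
      (∫ z, (z.2 - f z.1) ^ 2 ∂ν) - (∫ z, (z.2 - fstar z.1) ^ 2 ∂ν)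
        = ∫ x, (f x - fstar x) ^ 2 ∂PX := by
  have hexcess := IsRegressionFunction.integral_sq_sub_sub_integral_sq_sub hY hfstarmeas
    hfstar01 hfmeas hf01 hcond
  refine ⟨?_, ?_⟩
  · have hd_nonneg : 0 ≤ ∫ z, (f z.1 - fstar z.1) ^ 2 ∂ν := integral_nonneg fun _ => sq_nonneg _
    rw [hexcess]
    linarith [integral_sq_sub_sq_sub_sq_le hY hfstarmeas hfstar01 hfmeas hf01]
  · rw [hexcess, hPX, integral_map measurable_fst.aemeasurable (by fun_prop)]
end
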